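/- Let Z₁, …, Zₙ be independent real random variables with E[Zᵢ] = 0, |Zᵢ| ≤ M almost surely, and Var(∑_{i=1}^n Zᵢ) ≤ ν. Then for all t > 0, P(max_{q ≤ n} |∑_{i=1}^q Zᵢ| > t) ≤ 2 exp(−t² / (2ν + (2/3) M t)). -/

import Mathlib

open MeasureTheory ProbabilityTheory Finset Real

open scoped Nat

/-!
The process `exp (l * S q)`, `S q` the `q`-th partial sum, is a nonnegative submartingale: each
step multiplies it by `exp (l * Z q)`, which is independent of the past and has mean at least `1`
because `1 + x ≤ exp x` and `Z q` is centered. Doob's maximal inequality therefore bounds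
`P (∃ q ≤ n, t < S q)` by `E exp (l * S n) / exp (l * t)`. Bernstein's moment bound
`exp x ≤ 1 + x + x ^ 2 / (2 * (1 - u / 3))` for `|x| ≤ u < 3` (from `(k + 2)! ≥ 2 * 3 ^ k`) and
independence give `E exp (l * S n) ≤ exp (l ^ 2 * ν / (2 * (1 - l * M / 3)))`, and the choice
`l = t / (ν + M * t / 3)` turns the bound into `exp (-t ^ 2 / (2 * ν + 2 / 3 * M * t))`.
The same bound for `-Z` accounts for the factor `2`.
-/

theorem Nat.two_mul_three_pow_le_factorial (n : ℕ) : 2 * 3 ^ n ≤ (n + 2)! := by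
  induction n with
  | zero => decide
  | succ k ih =>
    rw [Nat.factorial_succ, pow_succ]
    nlinarith

theorem Real.exp_le_one_add_add_sq_div {x u : ℝ} (hu : u < 3) (hx : |x| ≤ u) :
    exp x ≤ 1 + x + x ^ 2 / (2 * (1 - u / 3)) := by
  have hu0 : 0 ≤ u := (abs_nonneg x).trans hx
  have hsum := Real.summable_pow_div_factorial x
  have hterm (k : ℕ) : x ^ (k + 2) / (k + 2)! ≤ x ^ 2 / 2 * (u / 3) ^ k := by
    have hpow : x ^ (k + 2) ≤ x ^ 2 * u ^ k := calc
      x ^ (k + 2) ≤ |x| ^ (k + 2) := (abs_pow x _).symm ▸ le_abs_self _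
      _ = x ^ 2 * |x| ^ k := by rw [pow_add, sq_abs, mul_comm]
      _ ≤ x ^ 2 * u ^ k := by gcongr
    have hfact : (2 * 3 ^ k : ℝ) ≤ (k + 2)! := mod_cast Nat.two_mul_three_pow_le_factorial k
    calc x ^ (k + 2) / (k + 2)! ≤ x ^ 2 * u ^ k / (2 * 3 ^ k) :=
          div_le_div₀ (by positivity) hpow (by positivity) hfact
      _ = x ^ 2 / 2 * (u / 3) ^ k := by rw [div_pow]; ring
  calc exp x = 1 + x + ∑' k : ℕ, x ^ (k + 2) / (k + 2)! := by
        rw [Real.exp_eq_exp_ℝ, NormedSpace.exp_eq_tsum_div]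
        dsimp only
        rw [← hsum.sum_add_tsum_nat_add 2]
        simp [Finset.sum_range_succ]
    _ ≤ 1 + x + ∑' k : ℕ, x ^ 2 / 2 * (u / 3) ^ k := by
        exact add_le_add_right (((summable_nat_add_iff 2).2 hsum).tsum_le_tsum hterm
          ((summable_geometric_of_lt_one (by positivity) (by linarith)).mul_left _)) _
    _ = 1 + x + x ^ 2 / (2 * (1 - u / 3)) := by
        rw [tsum_mul_left, tsum_geometric_of_lt_one (by positivity) (by linarith)]
        field_simp

section MGF

variable {Ω ι : Type*} [MeasurableSpace Ω] {P : Measure Ω} [IsProbabilityMeasure P]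

theorem integrable_exp_mul_of_abs_le {X : Ω → ℝ} {M : ℝ} (hX : AEMeasurable X P)
    (hbdd : ∀ᵐ ω ∂P, |X ω| ≤ M) (l : ℝ) : Integrable (fun ω => exp (l * X ω)) P := by
  refine .of_bound (hX.const_mul l).exp.aestronglyMeasurable (exp (|l| * M)) ?_
  filter_upwards [hbdd] with ω hω
  rw [norm_of_nonneg (exp_pos _).le, exp_le_exp]
  calc l * X ω ≤ |l * X ω| := le_abs_self _
    _ = |l| * |X ω| := abs_mul _ _
    _ ≤ |l| * M := by gcongr

theorem mgf_le_exp_mul_variance_of_abs_le {X : Ω → ℝ} {M l : ℝ} (hX : AEMeasurable X P)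
    (hmean : P[X] = 0) (hbdd : ∀ᵐ ω ∂P, |X ω| ≤ M) (hl : 0 ≤ l) (hlM : l * M < 3) :
    mgf X P l ≤ exp (l ^ 2 * variance X P / (2 * (1 - l * M / 3))) := by
  set c := l ^ 2 / (2 * (1 - l * M / 3))
  have hmem : MemLp X 2 P := memLp_of_bounded (hbdd.mono fun _ h => abs_le.1 h)
    hX.aestronglyMeasurable 2
  have hint : Integrable X P := hmem.integrable one_le_two
  have hquad : ∀ᵐ ω ∂P, exp (l * X ω) ≤ 1 + l * X ω + c * X ω ^ 2 := by
    filter_upwards [hbdd] with ω hω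
    have hlX : |l * X ω| ≤ l * M := by rw [abs_mul, abs_of_nonneg hl]; gcongr
    convert Real.exp_le_one_add_add_sq_div hlM hlX using 1
    ring
  have hlin : Integrable (fun ω => 1 + l * X ω) P := (integrable_const 1).add (hint.const_mul l)
  have hsq : Integrable (fun ω => c * X ω ^ 2) P := hmem.integrable_sq.const_mul c
  calc mgf X P l ≤ ∫ ω, 1 + l * X ω + c * X ω ^ 2 ∂P :=
        integral_mono_ae (integrable_exp_mul_of_abs_le hX hbdd l) (hlin.add hsq) hquad
    _ = 1 + c * variance X P := by
        rw [integral_add hlin hsq, integral_add (integrable_const 1) (hint.const_mul l),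
          integral_const_mul, integral_const_mul, hmean, variance_of_integral_eq_zero hX hmean]
        simp
    _ ≤ exp (c * variance X P) := by linarith [add_one_le_exp (c * variance X P)]
    _ = exp (l ^ 2 * variance X P / (2 * (1 - l * M / 3))) := by rw [div_mul_eq_mul_div]

theorem mgf_sum_le_of_abs_le [Fintype ι] {Z : ι → Ω → ℝ} {M ν l : ℝ} (hindep : iIndepFun Z P)
    (hmeas : ∀ i, Measurable (Z i)) (hmean : ∀ i, P[Z i] = 0) (hbdd : ∀ i, ∀ᵐ ω ∂P, |Z i ω| ≤ M)
    (hvar : variance (fun ω => ∑ i, Z i ω) P ≤ ν) (hl : 0 ≤ l) (hlM : l * M < 3) :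
    mgf (fun ω => ∑ i, Z i ω) P l ≤ exp (l ^ 2 * ν / (2 * (1 - l * M / 3))) := by
  have hvar_sum : ∑ i, variance (Z i) P ≤ ν := by
    rw [← IndepFun.variance_sum (fun i _ => memLp_of_bounded ((hbdd i).mono fun _ h => abs_le.1 h)
      (hmeas i).aestronglyMeasurable 2) fun i _ j _ hij => hindep.indepFun hij]
    rwa [Finset.sum_fn]
  calc mgf (fun ω => ∑ i, Z i ω) P l = ∏ i, mgf (Z i) P l := by
        rw [← Finset.sum_fn, hindep.mgf_sum hmeas univ]
    _ ≤ ∏ i, exp (l ^ 2 * variance (Z i) P / (2 * (1 - l * M / 3))) :=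
        prod_le_prod (fun _ _ => mgf_nonneg) fun i _ =>
          mgf_le_exp_mul_variance_of_abs_le (hmeas i).aemeasurable (hmean i) (hbdd i) hl hlM
    _ = exp (l ^ 2 * (∑ i, variance (Z i) P) / (2 * (1 - l * M / 3))) := by
        rw [← exp_sum, mul_sum, sum_div]
    _ ≤ exp (l ^ 2 * ν / (2 * (1 - l * M / 3))) := by
        gcongr
        linarith

theorem one_le_mgf_of_integral_eq_zero {X : Ω → ℝ} (hint : Integrable X P) (hmean : P[X] = 0)
    {l : ℝ} (hexp : Integrable (fun ω => exp (l * X ω)) P) : 1 ≤ mgf X P l := by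
  have hlin : Integrable (fun ω => 1 + l * X ω) P := (integrable_const 1).add (hint.const_mul l)
  calc 1 = ∫ ω, 1 + l * X ω ∂P := by
        rw [integral_add (integrable_const 1) (hint.const_mul l), integral_const_mul, hmean]
        simp
    _ ≤ mgf X P l := integral_mono hlin hexp fun ω => by
        linarith [add_one_le_exp (l * X ω)]

end MGF

theorem MeasureTheory.Submartingale.measureReal_exists_ge_le {Ω : Type*} [MeasurableSpace Ω]
    {P : Measure Ω} [IsFiniteMeasure P] {f : ℕ → Ω → ℝ} {𝒢 : Filtration ℕ ‹MeasurableSpace Ω›}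
    (hsub : Submartingale f 𝒢 P) (hnonneg : 0 ≤ f) {ε : ℝ} (hε : 0 < ε) (n : ℕ) :
    P.real {ω | ∃ q ≤ n, ε ≤ f q ω} ≤ (∫ ω, f n ω ∂P) / ε := by
  set A := {ω | (ε.toNNReal : ℝ) ≤ (range (n + 1)).sup' nonempty_range_add_one fun k => f k ω}
  have hA : {ω | ∃ q ≤ n, ε ≤ f q ω} ⊆ A := fun ω ⟨q, hq, hqω⟩ =>
    (Real.coe_toNNReal _ hε.le ▸ hqω).trans
      (le_sup' (fun k => f k ω) (mem_range.2 (Nat.lt_succ_of_le hq)))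
  rw [le_div_iff₀ hε, mul_comm]
  calc ε * P.real {ω | ∃ q ≤ n, ε ≤ f q ω} ≤ ε * P.real A := by
        gcongr
        exact measure_ne_top P A
    _ = (ε.toNNReal * P A).toReal := by
        rw [ENNReal.toReal_mul, ENNReal.coe_toReal, Real.coe_toNNReal _ hε.le, measureReal_def]
    _ ≤ (ENNReal.ofReal (∫ ω in A, f n ω ∂P)).toReal :=
        ENNReal.toReal_mono ENNReal.ofReal_ne_top (maximal_ineq hsub hnonneg n)
    _ = ∫ ω in A, f n ω ∂P := ENNReal.toReal_ofReal (integral_nonneg (hnonneg n))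
    _ ≤ ∫ ω, f n ω ∂P := setIntegral_le_integral (hsub.integrable n) (.of_forall (hnonneg n))

section PartialSum

variable {Ω : Type*} {n : ℕ} (Z : Fin n → Ω → ℝ)

def partialSum (q : ℕ) (ω : Ω) : ℝ := ∑ i ∈ univ.filter (fun i : Fin n => (i : ℕ) < q), Z i ω

theorem partialSum_succ (q : ℕ) (ω : Ω) :
    partialSum Z (q + 1) ω =
      partialSum Z q ω + ∑ i ∈ univ.filter (fun i : Fin n => (i : ℕ) = q), Z i ω := by
  rw [partialSum, partialSum, ← sum_union (disjoint_filter.2 fun _ _ h => h.ne), ← filter_or]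
  simp only [Nat.lt_succ_iff_lt_or_eq]

theorem partialSum_self (ω : Ω) : partialSum Z n ω = ∑ i, Z i ω := by
  rw [partialSum, filter_true_of_mem fun i _ => i.isLt]

theorem partialSum_neg (q : ℕ) (ω : Ω) : partialSum (fun i => -Z i) q ω = -partialSum Z q ω := by
  simp only [partialSum, Pi.neg_apply, sum_neg_distrib]

theorem measurable_sum_filter_iSup_comap {ι : Type*} [Fintype ι] (X : ι → Ω → ℝ) (p : ι → Prop)
    [DecidablePred p] :
    Measurable[⨆ i ∈ {i | p i}, MeasurableSpace.comap (X i) inferInstance]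
      (fun ω => ∑ i ∈ univ.filter p, X i ω) :=
  Finset.measurable_sum _ fun i hi => (comap_measurable (X i)).mono
    (le_iSup₂ (f := fun i (_ : p i) => MeasurableSpace.comap (X i) inferInstance) i
      (mem_filter.1 hi).2) le_rfl

variable [MeasurableSpace Ω]

def prefixFiltration (hmeas : ∀ i, Measurable (Z i)) : Filtration ℕ ‹MeasurableSpace Ω› where
  seq q := ⨆ i ∈ {i : Fin n | (i : ℕ) < q}, MeasurableSpace.comap (Z i) inferInstance
  mono' _ _ hqq' := biSup_mono fun _ hi => lt_of_lt_of_le hi hqq'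
  le' _ := iSup₂_le fun i _ => (hmeas i).comap_le

theorem measurable_partialSum (hmeas : ∀ i, Measurable (Z i)) (q : ℕ) :
    Measurable[prefixFiltration Z hmeas q] (partialSum Z q) :=
  measurable_sum_filter_iSup_comap Z _

variable {P : Measure Ω} [IsProbabilityMeasure P] {Z} {l : ℝ} (hindep : iIndepFun Z P) (hmeas : ∀ i, Measurable (Z i))
  (hint : ∀ i, Integrable (Z i) P) (hmean : ∀ i, P[Z i] = 0)
  (hexp : ∀ i, Integrable (fun ω => exp (l * Z i ω)) P)
include hindep hmeas hexp

theorem integrable_exp_mul_sum_filter (p : Fin n → Prop) [DecidablePred p] :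
    Integrable (fun ω => exp (l * ∑ i ∈ univ.filter p, Z i ω)) P := by
  simpa only [Finset.sum_apply] using hindep.integrable_exp_mul_sum hmeas fun i _ => hexp i

include hint hmean

theorem submartingale_exp_mul_partialSum :
    Submartingale (fun q ω => exp (l * partialSum Z q ω)) (prefixFiltration Z hmeas) P := by
  have hadapted (q : ℕ) :
      StronglyMeasurable[prefixFiltration Z hmeas q] fun ω => exp (l * partialSum Z q ω) :=
    ((measurable_partialSum Z hmeas q).const_mul l).exp.stronglyMeasurable
  refine submartingale_nat hadapted
    (fun q => integrable_exp_mul_sum_filter hindep hmeas hexp _) fun q => ?_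
  set T : Ω → ℝ := fun ω => ∑ i ∈ univ.filter (fun i : Fin n => (i : ℕ) = q), Z i ω
  have hstep : (fun ω => exp (l * partialSum Z (q + 1) ω)) =
      (fun ω => exp (l * partialSum Z q ω)) * fun ω => exp (l * T ω) := by
    ext ω
    rw [partialSum_succ, mul_add, exp_add, Pi.mul_apply]
  have hpull : P[(fun ω => exp (l * partialSum Z q ω)) * (fun ω => exp (l * T ω)) |
      prefixFiltration Z hmeas q] =ᵐ[P]
      (fun ω => exp (l * partialSum Z q ω)) *
        P[fun ω => exp (l * T ω) | prefixFiltration Z hmeas q] :=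
    condExp_mul_of_stronglyMeasurable_left (hadapted q)
      (hstep ▸ integrable_exp_mul_sum_filter hindep hmeas hexp _)
      (integrable_exp_mul_sum_filter hindep hmeas hexp _)
  have hindepT : Indep (⨆ i ∈ {i : Fin n | (i : ℕ) = q}, MeasurableSpace.comap (Z i) inferInstance)
      (prefixFiltration Z hmeas q) P :=
    indep_iSup_of_disjoint (fun i => (hmeas i).comap_le) hindep
      (Set.disjoint_left.2 fun _ h h' => (ne_of_lt h') h)
  have hcondT : P[fun ω => exp (l * T ω) | prefixFiltration Z hmeas q] =ᵐ[P]
      fun _ => mgf T P l :=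
    condExp_indep_eq (iSup₂_le fun i _ => (hmeas i).comap_le) ((prefixFiltration Z hmeas).le q)
      ((measurable_sum_filter_iSup_comap Z _).const_mul l).exp.stronglyMeasurable hindepT
  have hmgfT : 1 ≤ mgf T P l := one_le_mgf_of_integral_eq_zero
    (integrable_finsetSum _ fun i _ => hint i)
    (by rw [integral_finsetSum _ fun i _ => hint i]; exact sum_eq_zero fun i _ => hmean i)
    (integrable_exp_mul_sum_filter hindep hmeas hexp _)
  rw [hstep]
  filter_upwards [hpull, hcondT] with ω hpull hT
  rw [hpull, Pi.mul_apply, hT]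
  exact le_mul_of_one_le_right (exp_pos _).le hmgfT

theorem measureReal_exists_partialSum_gt_le (hl : 0 ≤ l) (t : ℝ) :
    P.real {ω | ∃ q ≤ n, t < partialSum Z q ω} ≤ mgf (fun ω => ∑ i, Z i ω) P l / exp (l * t) := by
  calc P.real {ω | ∃ q ≤ n, t < partialSum Z q ω}
      ≤ P.real {ω | ∃ q ≤ n, exp (l * t) ≤ exp (l * partialSum Z q ω)} :=
        measureReal_mono fun ω ⟨q, hq, hqt⟩ => ⟨q, hq, exp_le_exp.2 (by gcongr)⟩
    _ ≤ (∫ ω, exp (l * partialSum Z n ω) ∂P) / exp (l * t) :=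
        (submartingale_exp_mul_partialSum hindep hmeas hint hmean hexp).measureReal_exists_ge_le
          (fun _ _ => (exp_pos _).le) (exp_pos _) n
    _ = mgf (fun ω => ∑ i, Z i ω) P l / exp (l * t) := by simp only [partialSum_self, mgf]

end PartialSum

theorem bernstein_partialSum_gt {Ω : Type*} [MeasurableSpace Ω] {P : Measure Ω}
    [IsProbabilityMeasure P] {n : ℕ} {Z : Fin n → Ω → ℝ} {M ν t : ℝ} (hM : 0 ≤ M) (hν : 0 < ν)
    (hindep : iIndepFun Z P) (hmeas : ∀ i, Measurable (Z i)) (hint : ∀ i, Integrable (Z i) P)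
    (hmean : ∀ i, P[Z i] = 0) (hbdd : ∀ i, ∀ᵐ ω ∂P, |Z i ω| ≤ M)
    (hvar : variance (fun ω => ∑ i, Z i ω) P ≤ ν) (ht : 0 < t) :
    P.real {ω | ∃ q ≤ n, t < partialSum Z q ω} ≤ exp (-(t ^ 2) / (2 * ν + (2 / 3) * M * t)) := by
  have hD : 0 < ν + M * t / 3 := by positivity
  set l := t / (ν + M * t / 3) with hl_def
  have hl : 0 ≤ l := by positivity
  have hlM : l * M < 3 := by
    rw [div_mul_eq_mul_div, div_lt_iff₀ hD]
    linarith
  calc P.real {ω | ∃ q ≤ n, t < partialSum Z q ω}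
      ≤ mgf (fun ω => ∑ i, Z i ω) P l / exp (l * t) :=
        measureReal_exists_partialSum_gt_le hindep hmeas hint hmean
          (fun i => integrable_exp_mul_of_abs_le (hmeas i).aemeasurable (hbdd i) l) hl t
    _ ≤ exp (l ^ 2 * ν / (2 * (1 - l * M / 3))) / exp (l * t) := by
        gcongr
        exact mgf_sum_le_of_abs_le hindep hmeas hmean hbdd hvar hl hlM
    _ = exp (-(t ^ 2) / (2 * ν + (2 / 3) * M * t)) := by
        have hc : 1 - l * M / 3 = ν / (ν + M * t / 3) := by
          rw [hl_def]
          field_simp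
          ring
        rw [← exp_sub, hc, hl_def]
        congr 1
        field_simp
        ring

/-- maximal version of Bernstein's inequality for independent, centered,
bounded random variables. -/
theorem bernstein_maximal {Ω : Type*} [MeasurableSpace Ω] (P : Measure Ω) [IsProbabilityMeasure P]
    (n : ℕ) (Z : Fin n → Ω → ℝ) (M ν : ℝ) (hM : 0 < M) (hν : 0 < ν)
    (hmeas : ∀ i, Measurable (Z i))
    (hindep : iIndepFun Z P)
    (hint : ∀ i, Integrable (Z i) P)
    (hmean : ∀ i, ∫ ω, Z i ω ∂P = 0)
    (hbdd : ∀ i, ∀ᵐ ω ∂P, |Z i ω| ≤ M)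
    (hvar : variance (fun ω => ∑ i, Z i ω) P ≤ ν) :
    ∀ t : ℝ, 0 < t →
      (P {ω | ∃ q : ℕ, q ≤ n ∧
          t < |∑ i ∈ Finset.univ.filter (fun i : Fin n => (i : ℕ) < q), Z i ω|}).toReal ≤
        2 * Real.exp (-(t ^ 2) / (2 * ν + (2 / 3) * M * t)) := by
  intro t ht
  have hupper := bernstein_partialSum_gt hM.le hν hindep hmeas hint hmean hbdd hvar ht
  have hlower := bernstein_partialSum_gt (Z := fun i => -Z i) hM.le hν
    (hindep.comp (fun _ x => -x) fun _ => measurable_neg) (fun i => (hmeas i).neg)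
    (fun i => (hint i).neg) (fun i => by simp only [Pi.neg_apply, integral_neg, hmean i, neg_zero])
    (fun i => (hbdd i).mono fun ω h => by rwa [Pi.neg_apply, abs_neg])
    (by simpa only [Pi.neg_apply, sum_neg_distrib, variance_fun_neg] using hvar) ht
  calc (P {ω | ∃ q : ℕ, q ≤ n ∧ t < |partialSum Z q ω|}).toReal
      ≤ P.real ({ω | ∃ q ≤ n, t < partialSum Z q ω} ∪
          {ω | ∃ q ≤ n, t < partialSum (fun i => -Z i) q ω}) := by
        refine measureReal_mono fun ω ⟨q, hq, hqt⟩ => ?_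
        rcases lt_abs.1 hqt with h | h
        exacts [Or.inl ⟨q, hq, h⟩, Or.inr ⟨q, hq, (partialSum_neg Z q ω).symm ▸ h⟩]
    _ ≤ _ := measureReal_union_le _ _
    _ ≤ 2 * exp (-(t ^ 2) / (2 * ν + (2 / 3) * M * t)) := by linarith
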